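/- With the labeling q_1,…,q_r, a_1,…,a_k of the arcs of the fixed proper circular arc representation of the minimum counterexample 𝒢: for every i with 2x ≤ i ≤ k − x, the arc a_i is not clockwise adjacent to the arc a_{i−2x+1}. -/

import Mathlib

open SimpleGraph
open scoped Classical

instance : Fact ((0:ℝ) < 1) := ⟨one_pos⟩

/-- An arc on the unit circle `AddCircle 1`, described by its left endpoint (the first
endpoint met anticlockwise from an interior point) and its (clockwise) length.
Since `0 < len < 1`, an arc is neither a single point nor the whole circle. -/
structure CArc where
  left : AddCircle (1:ℝ)
  len : ℝ
  len_pos : 0 < len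
  len_lt_one : len < 1

namespace CArc

/-- The set of points of the arc: going clockwise from the left endpoint for `len`. -/
def pts (a : CArc) : Set (AddCircle (1:ℝ)) :=
  {q | ∃ t : ℝ, 0 ≤ t ∧ t ≤ a.len ∧ q = a.left + (t : AddCircle (1:ℝ))}

/-- The right endpoint of an arc. -/
noncomputable def right (a : CArc) : AddCircle (1:ℝ) := a.left + ((a.len : ℝ) : AddCircle (1:ℝ))

end CArc

/-- A family of arcs on the circle: a finite set of arcs with all endpoints distinct. -/
structure ArcFamily where
  arcs : Finset CArc
  endpoints_distinct :
    ∀ a ∈ arcs, ∀ b ∈ arcs, a ≠ b →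
      a.left ≠ b.left ∧ a.left ≠ b.right ∧ a.right ≠ b.left ∧ a.right ≠ b.right

namespace ArcFamily

/-- A family of arcs is proper if no arc is properly contained in another. -/
def IsProper (F : ArcFamily) : Prop :=
  ∀ a ∈ F.arcs, ∀ b ∈ F.arcs, ¬ a.pts ⊂ b.pts

/-- The overlap set of a point `p`: all arcs of the family containing `p`. -/
noncomputable def overlap (F : ArcFamily) (p : AddCircle (1:ℝ)) : Finset CArc :=
  F.arcs.filter fun a => p ∈ a.pts

/-- `r_sup`: the maximum cardinality of an overlap set. -/
noncomputable def rsup (F : ArcFamily) : ℕ :=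
  sSup {n | ∃ p, (F.overlap p).card = n}

/-- `r_inf`: the minimum cardinality of an overlap set. -/
noncomputable def rinf (F : ArcFamily) : ℕ :=
  sInf {n | ∃ p, (F.overlap p).card = n}

/-- The circular arc graph of a family: vertices are the arcs, two distinct arcs are
adjacent iff they intersect. -/
def graph (F : ArcFamily) : SimpleGraph {a : CArc // a ∈ F.arcs} where
  Adj u v := u ≠ v ∧ (u.1.pts ∩ v.1.pts).Nonempty
  symm := ⟨by rintro u v ⟨h, q, h1, h2⟩; exact ⟨h.symm, q, h2, h1⟩⟩
  loopless := ⟨by rintro u ⟨h, -⟩; exact h rfl⟩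

/-- `F.CwAdj u v` : the arc `v` is clockwise adjacent to the arc `u`,
i.e. `v ≠ u` and `v ∈ O(r(u))`. -/
def CwAdj (F : ArcFamily) (u v : CArc) : Prop :=
  v ≠ u ∧ v ∈ F.overlap u.right

/-- `F.AcwAdj u v` : the arc `v` is anticlockwise adjacent to the arc `u`,
i.e. `v ≠ u` and `v ∈ O(l(u))`. -/
def AcwAdj (F : ArcFamily) (u v : CArc) : Prop :=
  v ≠ u ∧ v ∈ F.overlap u.left

end ArcFamily

/-- `G` has a complete minor on `m` vertices: there are `m` pairwise disjoint connected
branch sets with an edge of `G` between any two of them. -/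
def HasKMinor {V : Type*} (G : SimpleGraph V) (m : ℕ) : Prop :=
  ∃ B : Fin m → Set V,
    (∀ i, (G.induce (B i)).Connected) ∧
    (Pairwise fun i j => Disjoint (B i) (B j)) ∧
    (Pairwise fun i j => ∃ u ∈ B i, ∃ v ∈ B j, G.Adj u v)

/-- A graph is a proper circular arc graph if it is isomorphic to the circular arc graph
of some proper family of arcs. -/
def IsProperCircularArcGraph {V : Type*} (G : SimpleGraph V) : Prop :=
  ∃ F : ArcFamily, F.IsProper ∧ Nonempty (G ≃g F.graph)

/-- The clockwise angular distance from `p` to `q`: the unique `t ∈ [0,1)`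
with `q = p + t`.  Points are "encountered" in clockwise order of this quantity
when traversing clockwise from `p`. -/
noncomputable def angFrom (p q : AddCircle (1:ℝ)) : ℝ :=
  ((AddCircle.equivIco (1:ℝ) 0) (q - p) : ℝ)

/-- A minimum counterexample to Hadwiger's conjecture among proper circular arc graphs:
a proper family of arcs whose circular arc graph `𝒢` has no complete minor on `χ(𝒢)`
vertices, while every proper circular arc graph on fewer vertices than `𝒢` has a
complete minor on its own chromatic number of vertices. -/
structure MinCounterexample where
  F : ArcFamily
  proper : F.IsProper
  no_clique_minor : ∀ m : ℕ, F.graph.chromaticNumber = m → ¬ HasKMinor F.graph m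
  minimal : ∀ (V : Type) [inst : Fintype V] (G : SimpleGraph V),
    IsProperCircularArcGraph G → Fintype.card V < F.arcs.card →
    ∀ m : ℕ, G.chromaticNumber = m → HasKMinor G m

/-- A minimum counterexample `𝒢` to Hadwiger's conjecture among proper circular arc
graphs, together with a fixed maximum overlap set `O = O(p₀)` of cardinality `r`,
the quantities `x = χ(𝒢) − r` and `k = n − r`, and the labeling `q 1, …, q r`
(the arcs of `O`) and `a 1, …, a k` (the remaining arcs) of the arcs of the
representation in the clockwise order, starting from `p₀`, in which their right
endpoints are encountered. -/
structure LabeledMinCounterexample extends MinCounterexample where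
  p₀ : AddCircle (1:ℝ)
  r : ℕ
  x : ℕ
  k : ℕ
  q : ℕ → CArc
  a : ℕ → CArc
  hr : (F.overlap p₀).card = r
  hmax : r = F.rsup
  hx : F.graph.chromaticNumber = ((r + x : ℕ) : ℕ∞)
  hk : F.arcs.card = r + k
  q_mem : ∀ i, 1 ≤ i → i ≤ r → q i ∈ F.overlap p₀
  a_mem : ∀ j, 1 ≤ j → j ≤ k → a j ∈ F.arcs ∧ a j ∉ F.overlap p₀
  q_inj : ∀ i i', 1 ≤ i → i ≤ r → 1 ≤ i' → i' ≤ r → q i = q i' → i = i'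
  a_inj : ∀ j j', 1 ≤ j → j ≤ k → 1 ≤ j' → j' ≤ k → a j = a j' → j = j'
  q_order : ∀ i i', 1 ≤ i → i < i' → i' ≤ r →
    angFrom p₀ (q i).right < angFrom p₀ (q i').right
  a_order : ∀ j j', 1 ≤ j → j < j' → j' ≤ k →
    angFrom p₀ (a j).right < angFrom p₀ (a j').right
  qa_order : ∀ i j, 1 ≤ i → i ≤ r → 1 ≤ j → j ≤ k →
    angFrom p₀ (q i).right < angFrom p₀ (a j).right


/-!
Suppose `a i` contains the right endpoint of `a i'`, where `i' = i - 2x + 1`; then all of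
`a i', …, a i` pass through that point. The minimum counterexample is vertex-critical, so every
arc has at least `r + x - 1` neighbours. In a proper family every neighbour of an arc contains one
of its endpoints, and at most `r` arcs pass through any point; hence at least `x + 1` arcs pass
through the right endpoint of each `a j`, which forces `a j` to meet `a (j + x)`. So for each
residue class modulo `x`, its `a`-arcs below the window and the `a`-arcs of another residue class
above it form a connected set, joined through the window. These `x` sets are pairwise adjacent
through the window, and every arc of `O` meets the first or the last arc of each of them (again by
counting neighbours). Together with the clique `O` they form a complete minor on
`r + x = χ(𝒢)` vertices.
-/

lemma angFrom_mem_Ico (p z : AddCircle (1:ℝ)) : angFrom p z ∈ Set.Ico (0:ℝ) 1 := by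
  simpa [angFrom] using ((AddCircle.equivIco (1:ℝ) 0) (z - p)).2

lemma angFrom_nonneg (p z : AddCircle (1:ℝ)) : 0 ≤ angFrom p z := (angFrom_mem_Ico p z).1

lemma angFrom_lt_one (p z : AddCircle (1:ℝ)) : angFrom p z < 1 := (angFrom_mem_Ico p z).2

lemma add_angFrom (p z : AddCircle (1:ℝ)) : p + ((angFrom p z : ℝ) : AddCircle (1:ℝ)) = z := by
  have : ((angFrom p z : ℝ) : AddCircle (1:ℝ)) = z - p :=
    (AddCircle.equivIco (1:ℝ) 0).symm_apply_apply (z - p)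
  rw [this]; abel

lemma angFrom_add_coe (p : AddCircle (1:ℝ)) (u : ℝ) :
    angFrom p (p + (u : AddCircle (1:ℝ))) = Int.fract u := by
  simp [angFrom]

lemma angFrom_self (p : AddCircle (1:ℝ)) : angFrom p p = 0 := by
  simpa using angFrom_add_coe p 0

namespace CArc

variable {p z : AddCircle (1:ℝ)} {u : CArc}

lemma left_mem_pts (u : CArc) : u.left ∈ u.pts := ⟨0, le_rfl, u.len_pos.le, by simp⟩

lemma right_mem_pts (u : CArc) : u.right ∈ u.pts := ⟨u.len, u.len_pos.le, le_rfl, rfl⟩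

lemma angFrom_right (p : AddCircle (1:ℝ)) (u : CArc) :
    angFrom p u.right = Int.fract (angFrom p u.left + u.len) := by
  rw [← angFrom_add_coe, right, AddCircle.coe_add, ← add_assoc, add_angFrom]

/-- The second disjunct is the part of the arc beyond `p` when the arc wraps around `p`. -/
lemma mem_pts_iff_angFrom (p : AddCircle (1:ℝ)) (u : CArc) (z : AddCircle (1:ℝ)) :
    z ∈ u.pts ↔ (angFrom p u.left ≤ angFrom p z ∧ angFrom p z ≤ angFrom p u.left + u.len) ∨
      angFrom p z + 1 ≤ angFrom p u.left + u.len := by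
  set L := angFrom p u.left
  have hL : u.left = p + (L : AddCircle (1:ℝ)) := (add_angFrom p _).symm
  have hL1 := angFrom_lt_one p u.left
  have hz0 := angFrom_nonneg p z
  constructor
  · rintro ⟨t, ht0, htl, rfl⟩
    rw [hL, add_assoc, ← AddCircle.coe_add, angFrom_add_coe]
    rcases lt_or_ge (L + t) 1 with h | h
    · rw [Int.fract_eq_self.2 ⟨by linarith [angFrom_nonneg p u.left], h⟩]
      exact Or.inl ⟨by linarith, by linarith⟩
    · have : Int.fract (L + t) = L + t - 1 := by
        rw [Int.fract_eq_iff]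
        exact ⟨by linarith, by linarith [u.len_lt_one], 1, by simp⟩
      rw [this]
      exact Or.inr (by linarith)
  · rintro (⟨h0, h1⟩ | h)
    · refine ⟨angFrom p z - L, by linarith, by linarith, ?_⟩
      rw [hL, add_assoc, ← AddCircle.coe_add, add_sub_cancel, add_angFrom]
    · refine ⟨angFrom p z + 1 - L, by linarith, by linarith, ?_⟩
      rw [hL, add_assoc, ← AddCircle.coe_add, add_sub_cancel, AddCircle.coe_add,
        AddCircle.coe_period, add_zero, add_angFrom]

lemma mem_pts_iff_of_not_mem (hp : p ∉ u.pts) :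
    z ∈ u.pts ↔ angFrom p u.left ≤ angFrom p z ∧ angFrom p z ≤ angFrom p u.right := by
  rw [mem_pts_iff_angFrom p, angFrom_self] at hp
  have hwrap : angFrom p u.left + u.len < 1 := by
    by_contra h; exact hp (Or.inr (by linarith))
  have hz := angFrom_nonneg p z
  rw [mem_pts_iff_angFrom p, angFrom_right,
    Int.fract_eq_self.2 ⟨by linarith [angFrom_nonneg p u.left, u.len_pos], hwrap⟩,
    or_iff_left (by linarith)]

lemma mem_pts_iff_of_mem (hp : p ∈ u.pts) :
    z ∈ u.pts ↔ angFrom p z ≤ angFrom p u.right ∨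
      (0 < angFrom p u.left ∧ angFrom p u.left ≤ angFrom p z) := by
  rw [mem_pts_iff_angFrom p, angFrom_self] at hp
  have hz0 := angFrom_nonneg p z
  have hz1 := angFrom_lt_one p z
  have hlen0 := u.len_pos
  have hlen1 := u.len_lt_one
  rw [mem_pts_iff_angFrom p, angFrom_right]
  rcases (angFrom_nonneg p u.left).eq_or_lt with hL0 | hL0
  · rw [← hL0, zero_add, Int.fract_eq_self.2 ⟨hlen0.le, hlen1⟩]
    constructor
    · rintro (h | h)
      · exact Or.inl h.2
      · exact Or.inl (by linarith)
    · rintro (h | h)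
      · exact Or.inl ⟨hz0, h⟩
      · exact absurd h.1 (lt_irrefl 0)
  · have hwrap : 1 ≤ angFrom p u.left + u.len := by
      rcases hp with h | h
      · linarith [h.1]
      · linarith
    have : Int.fract (angFrom p u.left + u.len) = angFrom p u.left + u.len - 1 := by
      rw [Int.fract_eq_iff]
      exact ⟨by linarith, by linarith [angFrom_lt_one p u.left], 1, by simp⟩
    rw [this]
    constructor
    · rintro (h | h)
      · exact Or.inr ⟨hL0, h.1⟩
      · exact Or.inl (by linarith)
    · rintro (h | h)
      · exact Or.inr (by linarith)
      · exact Or.inl ⟨h.2, by linarith⟩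

def meetGraph : SimpleGraph CArc where
  Adj u v := u ≠ v ∧ (u.pts ∩ v.pts).Nonempty
  symm := ⟨by rintro u v ⟨h, z, hu, hv⟩; exact ⟨h.symm, z, hv, hu⟩⟩
  loopless := ⟨by rintro u ⟨h, -⟩; exact h rfl⟩

end CArc

namespace ArcFamily

variable {F : ArcFamily} {p : AddCircle (1:ℝ)} {u v : CArc}

lemma mem_overlap : u ∈ F.overlap p ↔ u ∈ F.arcs ∧ p ∈ u.pts :=
  Finset.mem_filter

lemma graph_eq_induce (F : ArcFamily) : F.graph = CArc.meetGraph.induce (F.arcs : Set CArc) := by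
  ext u v
  exact and_congr_left' Subtype.ext_iff.not

noncomputable def erase (F : ArcFamily) (v : CArc) : ArcFamily where
  arcs := F.arcs.erase v
  endpoints_distinct a ha b hb :=
    F.endpoints_distinct a (Finset.mem_of_mem_erase ha) b (Finset.mem_of_mem_erase hb)

lemma IsProper.erase (hF : F.IsProper) (v : CArc) : (F.erase v).IsProper :=
  fun a ha b hb => hF a (Finset.mem_of_mem_erase ha) b (Finset.mem_of_mem_erase hb)

lemma IsProper.angFrom_left_le_of_not_mem (hF : F.IsProper) (hu : u ∈ F.arcs) (hv : v ∈ F.arcs)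
    (hpu : p ∉ u.pts) (hpv : p ∉ v.pts) (h : angFrom p u.right ≤ angFrom p v.right) :
    angFrom p u.left ≤ angFrom p v.left := by
  by_contra! hlt
  refine hF u hu v hv ⟨fun z hz => ?_, fun hsub => ?_⟩
  · rw [CArc.mem_pts_iff_of_not_mem hpu] at hz
    rw [CArc.mem_pts_iff_of_not_mem hpv]
    constructor <;> linarith [hz.1, hz.2]
  · have := (CArc.mem_pts_iff_of_not_mem hpu).1 (hsub v.left_mem_pts)
    linarith [this.1]

lemma IsProper.angFrom_left_le_of_mem (hF : F.IsProper) (hu : u ∈ F.arcs) (hv : v ∈ F.arcs)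
    (hpu : p ∉ u.pts) (hpv : p ∈ v.pts) (hv0 : 0 < angFrom p v.left) :
    angFrom p u.left ≤ angFrom p v.left := by
  by_contra! hlt
  refine hF u hu v hv ⟨fun z hz => ?_, fun hsub => hpu (hsub hpv)⟩
  rw [CArc.mem_pts_iff_of_not_mem hpu] at hz
  exact (CArc.mem_pts_iff_of_mem hpv).2 (Or.inr ⟨hv0, by linarith [hz.1]⟩)

/-- An arc meeting `v` but containing neither endpoint of `v` would lie strictly inside `v`. -/
lemma IsProper.endpoint_mem_of_inter (hF : F.IsProper) (hu : u ∈ F.arcs) (hv : v ∈ F.arcs)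
    (huv : (u.pts ∩ v.pts).Nonempty) : v.left ∈ u.pts ∨ v.right ∈ u.pts := by
  by_contra! h
  obtain ⟨hl, hr⟩ := h
  obtain ⟨z, hzu, hzv⟩ := huv
  have hv_iff : ∀ w, w ∈ v.pts ↔ angFrom v.left w ≤ angFrom v.left v.right := fun w => by
    rw [CArc.mem_pts_iff_of_mem v.left_mem_pts, angFrom_self]; simp
  rw [CArc.mem_pts_iff_of_not_mem hl] at hzu hr
  rw [hv_iff] at hzv
  have hR : angFrom v.left u.right < angFrom v.left v.right := by
    by_contra! h; exact hr ⟨by linarith [hzu.1], h⟩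
  refine hF u hu v hv ⟨fun w hw => ?_, fun hsub => hl (hsub v.left_mem_pts)⟩
  rw [CArc.mem_pts_iff_of_not_mem hl] at hw
  rw [hv_iff]; linarith [hw.2]

/-- Every neighbour of `v` contains an endpoint of `v`, and `v` contains both. -/
lemma IsProper.card_filter_adj_add_two_le (hF : F.IsProper) (hv : v ∈ F.arcs) :
    (F.arcs.filter (CArc.meetGraph.Adj v)).card + 2 ≤
      (F.overlap v.left).card + (F.overlap v.right).card := by
  classical
  have hsub : insert v (F.arcs.filter (CArc.meetGraph.Adj v)) ⊆
      F.overlap v.left ∪ F.overlap v.right := by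
    intro u hu
    rw [Finset.mem_union, mem_overlap, mem_overlap]
    rcases Finset.mem_insert.1 hu with rfl | hu
    · exact Or.inl ⟨hv, u.left_mem_pts⟩
    · obtain ⟨hu, -, huv⟩ := Finset.mem_filter.1 hu
      exact (hF.endpoint_mem_of_inter hu hv (Set.inter_comm _ _ ▸ huv)).imp
        (fun h => ⟨hu, h⟩) (fun h => ⟨hu, h⟩)
  have hinter : 1 ≤ (F.overlap v.left ∩ F.overlap v.right).card :=
    Finset.card_pos.2 ⟨v, Finset.mem_inter.2
      ⟨mem_overlap.2 ⟨hv, v.left_mem_pts⟩, mem_overlap.2 ⟨hv, v.right_mem_pts⟩⟩⟩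
  have := Finset.card_le_card hsub
  rw [Finset.card_insert_of_notMem fun h => CArc.meetGraph.irrefl (Finset.mem_filter.1 h).2]
    at this
  have := Finset.card_union_add_card_inter (F.overlap v.left) (F.overlap v.right)
  omega

end ArcFamily

namespace SimpleGraph

variable {V : Type*} {G : SimpleGraph V}

lemma connected_induce_singleton (v : V) : (G.induce {v}).Connected := by
  rw [induce_singleton_eq_top]; exact connected_top

lemma connected_induce_image_Iic {f : ℕ → V} :
    ∀ {n : ℕ}, (∀ c < n, G.Adj (f c) (f (c + 1))) → (G.induce (f '' Set.Iic n)).Connected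
  | 0, _ => by
    rw [show Set.Iic 0 = {0} by ext; simp, Set.image_singleton]
    exact connected_induce_singleton (f 0)
  | n + 1, h => by
    rw [show Set.Iic (n + 1) = Set.Iic n ∪ {n + 1} by ext; simp; omega, Set.image_union,
      Set.image_singleton]
    exact connected_induce_union
      (connected_induce_image_Iic fun c hc => h c (by omega)).preconnected
      (connected_induce_singleton _).preconnected ⟨n, Set.mem_Iic.2 le_rfl, rfl⟩ rfl
      (h n (by omega))

/-- Otherwise a colour missing on the neighbours of `v` extends the colouring to `v`. -/
lemma le_card_filter_adj_of_not_colorable [DecidableRel G.Adj] {s : Finset V} {v : V} {n : ℕ}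
    (hv : v ∈ s) (hcol : (G.induce ↑(s.erase v)).Colorable n)
    (hnot : ¬ (G.induce ↑s).Colorable n) : n ≤ (s.filter (G.Adj v)).card := by
  classical
  by_contra! hlt
  obtain ⟨c⟩ := hcol
  let d : V → Fin n := fun w => if h : w ∈ s.erase v then c ⟨w, h⟩ else ⟨0, by omega⟩
  obtain ⟨i₀, -, hi₀⟩ := Finset.exists_mem_notMem_of_card_lt_card
    (s := (s.filter (G.Adj v)).image d) (t := Finset.univ)
    (by simpa using Finset.card_image_le.trans_lt hlt)
  have hd : ∀ {u}, u ∈ s → G.Adj v u → d u ≠ i₀ := fun hu hvu hdu =>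
    hi₀ (Finset.mem_image.2 ⟨_, Finset.mem_filter.2 ⟨hu, hvu⟩, hdu⟩)
  refine hnot ⟨Coloring.mk (fun w => if w.1 = v then i₀ else d w.1) ?_⟩
  rintro ⟨w, hw⟩ ⟨w', hw'⟩ (hadj : G.Adj w w')
  dsimp only
  by_cases h : w = v <;> by_cases h' : w' = v
  · exact absurd (h.trans h'.symm) hadj.ne
  · subst h; rw [if_pos rfl, if_neg h']; exact (hd hw' hadj).symm
  · subst h'; rw [if_neg h, if_pos rfl]; exact hd hw hadj.symm
  · rw [if_neg h, if_neg h']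
    simp only [d, dif_pos (Finset.mem_erase.2 ⟨h, hw⟩), dif_pos (Finset.mem_erase.2 ⟨h', hw'⟩)]
    exact c.valid hadj

end SimpleGraph

structure IsKMinorModel {V : Type*} (G : SimpleGraph V) {m : ℕ} (B : Fin m → Set V) : Prop where
  connected : ∀ i, (G.induce (B i)).Connected
  disjoint : Pairwise fun i j => Disjoint (B i) (B j)
  adj : Pairwise fun i j => ∃ u ∈ B i, ∃ v ∈ B j, G.Adj u v

namespace IsKMinorModel

variable {V : Type*} {G : SimpleGraph V} {m n : ℕ}

lemma hasKMinor {B : Fin m → Set V} (h : IsKMinorModel G B) : HasKMinor G m :=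
  ⟨B, h.connected, h.disjoint, h.adj⟩

lemma of_pairwise_adj {f : Fin m → V} (h : Pairwise fun i j => G.Adj (f i) (f j)) :
    IsKMinorModel G fun i => {f i} where
  connected _ := SimpleGraph.connected_induce_singleton _
  disjoint _ _ hij := Set.disjoint_singleton.2 (h hij).ne
  adj i j hij := ⟨f i, rfl, f j, rfl, h hij⟩

lemma append {B : Fin m → Set V} {B' : Fin n → Set V} (h : IsKMinorModel G B)
    (h' : IsKMinorModel G B') (hdisj : ∀ i j, Disjoint (B i) (B' j))
    (hadj : ∀ i j, ∃ u ∈ B i, ∃ v ∈ B' j, G.Adj u v) : IsKMinorModel G (Fin.append B B') where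
  connected i := by
    induction i using Fin.addCases
    · rw [Fin.append_left]; exact h.connected _
    · rw [Fin.append_right]; exact h'.connected _
  disjoint i j hij := by
    induction i using Fin.addCases <;> induction j using Fin.addCases <;>
      simp only [Fin.append_left, Fin.append_right]
    · exact h.disjoint fun e => hij (by rw [e])
    · exact hdisj _ _
    · exact (hdisj _ _).symm
    · exact h'.disjoint fun e => hij (by rw [e])
  adj i j hij := by
    induction i using Fin.addCases <;> induction j using Fin.addCases <;>
      simp only [Fin.append_left, Fin.append_right]
    · exact h.adj fun e => hij (by rw [e])
    · exact hadj _ _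
    · obtain ⟨u, hu, v, hv, huv⟩ := hadj _ _; exact ⟨v, hv, u, hu, huv.symm⟩
    · exact h'.adj fun e => hij (by rw [e])

lemma induce {B : Fin m → Set V} (h : IsKMinorModel G B) {s : Set V} (hs : ∀ i, B i ⊆ s) :
    IsKMinorModel (G.induce s) fun i => Subtype.val ⁻¹' B i where
  connected i := by
    refine (h.connected i).map ⟨fun w => ⟨⟨w.1, hs i w.2⟩, w.2⟩, fun hadj => hadj⟩ ?_
    rintro ⟨w, hw⟩; exact ⟨⟨w.1, hw⟩, rfl⟩
  disjoint i j hij := (h.disjoint hij).preimage _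
  adj i j hij := by
    obtain ⟨u, hu, v, hv, huv⟩ := h.adj hij
    exact ⟨⟨u, hs i hu⟩, hu, ⟨v, hs j hv⟩, hv, huv⟩

end IsKMinorModel

namespace HasKMinor

variable {V W : Type*} {G : SimpleGraph V} {G' : SimpleGraph W} {m m' : ℕ}

lemma mono (h : HasKMinor G m) (hm : m' ≤ m) : HasKMinor G m' := by
  obtain ⟨B, hconn, hdisj, hadj⟩ := h
  have hinj := Fin.castLE_injective hm
  exact ⟨B ∘ Fin.castLE hm, fun i => hconn _, fun i j hij => hdisj (hinj.ne hij),
    fun i j hij => hadj (hinj.ne hij)⟩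

lemma map (h : HasKMinor G m) (f : G ↪g G') : HasKMinor G' m := by
  obtain ⟨B, hconn, hdisj, hadj⟩ := h
  refine ⟨fun i => f '' B i, fun i => ?_, fun i j hij => ?_, fun i j hij => ?_⟩
  · refine (hconn i).map ⟨fun w => ⟨f w.1, w.1, w.2, rfl⟩, fun hadj => f.map_adj_iff.2 hadj⟩ ?_
    rintro ⟨_, w, hw, rfl⟩; exact ⟨⟨w, hw⟩, rfl⟩
  · exact (Set.disjoint_image_iff f.injective).2 (hdisj hij)
  · obtain ⟨u, hu, v, hv, huv⟩ := hadj hij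
    exact ⟨f u, ⟨u, hu, rfl⟩, f v, ⟨v, hv, rfl⟩, f.map_adj_iff.2 huv⟩

end HasKMinor

namespace MinCounterexample

variable (C : MinCounterexample) {m : ℕ} {v : CArc}

lemma colorable_erase (hm : C.F.graph.chromaticNumber = m) (hv : v ∈ C.F.arcs) :
    (CArc.meetGraph.induce ↑(C.F.arcs.erase v)).Colorable (m - 1) := by
  obtain ⟨m', hm'⟩ : ∃ m' : ℕ, (C.F.erase v).graph.chromaticNumber = m' :=
    ENat.ne_top_iff_exists.1 (SimpleGraph.chromaticNumber_ne_top_iff_exists.2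
      ⟨_, (C.F.erase v).graph.colorable_of_fintype⟩) |>.imp fun _ h => h.symm
  have hcard : Fintype.card {a // a ∈ (C.F.erase v).arcs} < C.F.arcs.card := by
    rw [Fintype.card_coe]
    exact Finset.card_erase_lt_of_mem hv
  have hminor : HasKMinor C.F.graph m' := by
    have := C.minimal _ _ ⟨_, C.proper.erase v, ⟨SimpleGraph.Iso.refl⟩⟩ hcard m' hm'
    rw [ArcFamily.graph_eq_induce] at this ⊢
    exact this.map (CArc.meetGraph.induceHomOfLE (Finset.coe_subset.2 (Finset.erase_subset _ _)))
  have hlt : m' < m := by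
    by_contra! h; exact C.no_clique_minor m hm (hminor.mono h)
  have := SimpleGraph.chromaticNumber_le_iff_colorable.1 hm'.le
  rw [ArcFamily.graph_eq_induce] at this
  exact this.mono (by omega)

lemma le_card_filter_adj (hm : C.F.graph.chromaticNumber = m) (hv : v ∈ C.F.arcs) :
    m ≤ (C.F.arcs.filter (CArc.meetGraph.Adj v)).card + 1 := by
  rcases Nat.eq_zero_or_pos m with rfl | hm0
  · omega
  have hnot : ¬ (CArc.meetGraph.induce ↑C.F.arcs).Colorable (m - 1) := by
    rw [← ArcFamily.graph_eq_induce, ← SimpleGraph.chromaticNumber_le_iff_colorable, hm,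
      Nat.cast_le]
    omega
  have := SimpleGraph.le_card_filter_adj_of_not_colorable hv (C.colorable_erase hm hv) hnot
  omega

end MinCounterexample

lemma Nat.eq_of_add_mul_eq_add_mul {x s s' c c' : ℕ} (hs : s < x) (hs' : s' < x)
    (h : s + x * c = s' + x * c') : s = s' := by
  simpa [Nat.add_mul_mod_self_left, Nat.mod_eq_of_lt hs, Nat.mod_eq_of_lt hs'] using
    congrArg (· % x) h

namespace LabeledMinCounterexample

variable (C : LabeledMinCounterexample) {i j m s s' t : ℕ} {z : AddCircle (1:ℝ)}

lemma a_mem_arcs (hj : 1 ≤ j) (hjk : j ≤ C.k) : C.a j ∈ C.F.arcs := (C.a_mem j hj hjk).1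

lemma p₀_not_mem_a (hj : 1 ≤ j) (hjk : j ≤ C.k) : C.p₀ ∉ (C.a j).pts :=
  fun h => (C.a_mem j hj hjk).2 (ArcFamily.mem_overlap.2 ⟨C.a_mem_arcs hj hjk, h⟩)

lemma q_mem_arcs (ht : 1 ≤ t) (htr : t ≤ C.r) : C.q t ∈ C.F.arcs :=
  (ArcFamily.mem_overlap.1 (C.q_mem t ht htr)).1

lemma p₀_mem_q (ht : 1 ≤ t) (htr : t ≤ C.r) : C.p₀ ∈ (C.q t).pts :=
  (ArcFamily.mem_overlap.1 (C.q_mem t ht htr)).2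

lemma a_ne_q (hj : 1 ≤ j) (hjk : j ≤ C.k) (ht : 1 ≤ t) (htr : t ≤ C.r) : C.a j ≠ C.q t :=
  fun h => C.p₀_not_mem_a hj hjk (h ▸ C.p₀_mem_q ht htr)

lemma a_ne_a {j' : ℕ} (hj : 1 ≤ j) (hjk : j ≤ C.k) (hj' : 1 ≤ j') (hj'k : j' ≤ C.k)
    (hne : j ≠ j') : C.a j ≠ C.a j' :=
  fun h => hne (C.a_inj j j' hj hjk hj' hj'k h)

lemma card_overlap_le (p : AddCircle (1:ℝ)) : (C.F.overlap p).card ≤ C.r := by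
  rw [C.hmax]
  refine le_csSup ⟨C.F.arcs.card, ?_⟩ ⟨p, rfl⟩
  rintro _ ⟨p', rfl⟩
  exact Finset.card_le_card (Finset.filter_subset _ _)

lemma image_q_eq_overlap : (Finset.Icc 1 C.r).image C.q = C.F.overlap C.p₀ := by
  refine Finset.eq_of_subset_of_card_le (fun u hu => ?_) ?_
  · obtain ⟨t, ht, rfl⟩ := Finset.mem_image.1 hu
    exact C.q_mem t (Finset.mem_Icc.1 ht).1 (Finset.mem_Icc.1 ht).2
  · rw [C.hr, Finset.card_image_of_injOn (fun t ht t' ht' h => C.q_inj t t'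
      (Finset.mem_Icc.1 ht).1 (Finset.mem_Icc.1 ht).2 (Finset.mem_Icc.1 ht').1
      (Finset.mem_Icc.1 ht').2 h), Nat.card_Icc, Nat.add_sub_cancel]

lemma image_a_eq_sdiff : (Finset.Icc 1 C.k).image C.a = C.F.arcs \ C.F.overlap C.p₀ := by
  refine Finset.eq_of_subset_of_card_le (fun u hu => ?_) ?_
  · obtain ⟨j, hj, rfl⟩ := Finset.mem_image.1 hu
    exact Finset.mem_sdiff.2 (C.a_mem j (Finset.mem_Icc.1 hj).1 (Finset.mem_Icc.1 hj).2)
  · have hO : C.F.overlap C.p₀ ⊆ C.F.arcs := Finset.filter_subset _ _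
    rw [Finset.card_sdiff_of_subset hO, C.hr, C.hk, Finset.card_image_of_injOn
      (fun j hj j' hj' h => C.a_inj j j' (Finset.mem_Icc.1 hj).1 (Finset.mem_Icc.1 hj).2
        (Finset.mem_Icc.1 hj').1 (Finset.mem_Icc.1 hj').2 h), Nat.card_Icc]
    omega

lemma eq_q_or_eq_a {u : CArc} (hu : u ∈ C.F.arcs) :
    (∃ t, 1 ≤ t ∧ t ≤ C.r ∧ u = C.q t) ∨ (∃ j, 1 ≤ j ∧ j ≤ C.k ∧ u = C.a j) := by
  by_cases hp : u ∈ C.F.overlap C.p₀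
  · rw [← image_q_eq_overlap] at hp
    obtain ⟨t, ht, rfl⟩ := Finset.mem_image.1 hp
    exact Or.inl ⟨t, (Finset.mem_Icc.1 ht).1, (Finset.mem_Icc.1 ht).2, rfl⟩
  · have : u ∈ C.F.arcs \ C.F.overlap C.p₀ := Finset.mem_sdiff.2 ⟨hu, hp⟩
    rw [← image_a_eq_sdiff] at this
    obtain ⟨j, hj, rfl⟩ := Finset.mem_image.1 this
    exact Or.inr ⟨j, (Finset.mem_Icc.1 hj).1, (Finset.mem_Icc.1 hj).2, rfl⟩

lemma mem_a_iff (hj : 1 ≤ j) (hjk : j ≤ C.k) :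
    z ∈ (C.a j).pts ↔ angFrom C.p₀ (C.a j).left ≤ angFrom C.p₀ z ∧
      angFrom C.p₀ z ≤ angFrom C.p₀ (C.a j).right :=
  CArc.mem_pts_iff_of_not_mem (C.p₀_not_mem_a hj hjk)

lemma mem_q_iff (ht : 1 ≤ t) (htr : t ≤ C.r) :
    z ∈ (C.q t).pts ↔ angFrom C.p₀ z ≤ angFrom C.p₀ (C.q t).right ∨
      (0 < angFrom C.p₀ (C.q t).left ∧ angFrom C.p₀ (C.q t).left ≤ angFrom C.p₀ z) :=
  CArc.mem_pts_iff_of_mem (C.p₀_mem_q ht htr)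

lemma angFrom_right_a_le (hj : 1 ≤ j) (hjm : j ≤ m) (hmk : m ≤ C.k) :
    angFrom C.p₀ (C.a j).right ≤ angFrom C.p₀ (C.a m).right := by
  rcases hjm.eq_or_lt with rfl | h
  · exact le_rfl
  · exact (C.a_order j m hj h hmk).le

lemma angFrom_left_a_le (hj : 1 ≤ j) (hjm : j ≤ m) (hmk : m ≤ C.k) :
    angFrom C.p₀ (C.a j).left ≤ angFrom C.p₀ (C.a m).left :=
  C.proper.angFrom_left_le_of_not_mem (C.a_mem_arcs hj (by omega)) (C.a_mem_arcs (by omega) hmk)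
    (C.p₀_not_mem_a hj (by omega)) (C.p₀_not_mem_a (by omega) hmk)
    (C.angFrom_right_a_le hj hjm hmk)

lemma angFrom_left_a_le_left_q (hj : 1 ≤ j) (hjk : j ≤ C.k) (ht : 1 ≤ t) (htr : t ≤ C.r)
    (h0 : 0 < angFrom C.p₀ (C.q t).left) :
    angFrom C.p₀ (C.a j).left ≤ angFrom C.p₀ (C.q t).left :=
  C.proper.angFrom_left_le_of_mem (C.a_mem_arcs hj hjk) (C.q_mem_arcs ht htr)
    (C.p₀_not_mem_a hj hjk) (C.p₀_mem_q ht htr) h0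

lemma right_mem_a_of_le_of_right_mem_a {m' : ℕ} (hj : 1 ≤ j) (hjm : j ≤ m) (hmm' : m ≤ m')
    (hm'k : m' ≤ C.k) (h : (C.a j).right ∈ (C.a m').pts) : (C.a j).right ∈ (C.a m).pts := by
  rw [C.mem_a_iff (by omega) hm'k] at h
  rw [C.mem_a_iff (by omega) (by omega)]
  exact ⟨(C.angFrom_left_a_le (by omega) hmm' hm'k).trans h.1,
    C.angFrom_right_a_le hj hjm (by omega)⟩

lemma x_lt_card_overlap_right_a (hj : 1 ≤ j) (hjk : j ≤ C.k) :
    C.x < (C.F.overlap (C.a j).right).card := by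
  have := C.le_card_filter_adj C.hx (C.a_mem_arcs hj hjk)
  have := C.proper.card_filter_adj_add_two_le (C.a_mem_arcs hj hjk)
  have := C.card_overlap_le (C.a j).left
  omega

/-- Otherwise the more than `x` arcs through the right endpoint of `a j` would all be among
`a j, …, a (m - 1)`. -/
lemma right_mem_a_of_le_add_x (hj : 1 ≤ j) (hjm : j ≤ m) (hmx : m ≤ j + C.x) (hmk : m ≤ C.k) :
    (C.a j).right ∈ (C.a m).pts := by
  by_contra hm
  have hsub : C.F.overlap (C.a j).right ⊆ (Finset.Icc j (m - 1)).image C.a := by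
    intro u hu
    obtain ⟨hu, hru⟩ := ArcFamily.mem_overlap.1 hu
    rcases C.eq_q_or_eq_a hu with ⟨t, ht, htr, rfl⟩ | ⟨m', hm', hm'k, rfl⟩
    · refine absurd ?_ hm
      rcases (C.mem_q_iff ht htr).1 hru with h | ⟨h0, h⟩
      · exact absurd h (not_le.2 (C.qa_order t j ht htr hj (by omega)))
      · rw [C.mem_a_iff (by omega) hmk]
        exact ⟨(C.angFrom_left_a_le_left_q (by omega) hmk ht htr h0).trans h,
          C.angFrom_right_a_le hj hjm hmk⟩
    · refine Finset.mem_image.2 ⟨m', Finset.mem_Icc.2 ⟨?_, ?_⟩, rfl⟩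
      · by_contra! h
        exact ((C.mem_a_iff hm' hm'k).1 hru).2.not_gt (C.a_order m' j hm' h (by omega))
      · by_contra! h
        exact hm (C.right_mem_a_of_le_of_right_mem_a hj hjm (by omega) hm'k hru)
  have := (Finset.card_le_card hsub).trans Finset.card_image_le
  have := C.x_lt_card_overlap_right_a hj (by omega)
  rw [Nat.card_Icc] at *
  omega

lemma q_meets_a_or_meets_a_of_between (hs : 1 ≤ s) (hsj : s ≤ j) (hjm : j ≤ m)
    (hmk : m ≤ C.k) (ht : 1 ≤ t) (htr : t ≤ C.r) (h : ((C.q t).pts ∩ (C.a j).pts).Nonempty) :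
    ((C.q t).pts ∩ (C.a s).pts).Nonempty ∨ ((C.q t).pts ∩ (C.a m).pts).Nonempty := by
  obtain ⟨z, hzq, hza⟩ := h
  rw [C.mem_a_iff (by omega) (by omega)] at hza
  rcases (C.mem_q_iff ht htr).1 hzq with hz | ⟨h0, hz⟩
  · refine Or.inl ⟨_, (C.q t).right_mem_pts, (C.mem_a_iff hs (by omega)).2 ⟨?_, ?_⟩⟩
    · exact (C.angFrom_left_a_le hs hsj (by omega)).trans (hza.1.trans hz)
    · exact (C.qa_order t s ht htr hs (by omega)).le
  · refine Or.inr ⟨_, (C.q t).left_mem_pts, (C.mem_a_iff (by omega) hmk).2 ⟨?_, ?_⟩⟩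
    · exact C.angFrom_left_a_le_left_q (by omega) hmk ht htr h0
    · exact hz.trans (hza.2.trans (C.angFrom_right_a_le (by omega) hjm hmk))

/-- Otherwise `q t` would have at most `r - 1` neighbours in `O` and `x - 1` outside. -/
lemma q_meets_a_or_meets_a (ht : 1 ≤ t) (htr : t ≤ C.r) (hs : 1 ≤ s) (hsx : s ≤ C.x)
    (hxk : C.x ≤ C.k) :
    ((C.q t).pts ∩ (C.a s).pts).Nonempty ∨
      ((C.q t).pts ∩ (C.a (C.k - C.x + s)).pts).Nonempty := by
  by_contra! h
  obtain ⟨h₁, h₂⟩ := h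
  have hsub : C.F.arcs.filter (CArc.meetGraph.Adj (C.q t)) ⊆ (C.F.overlap C.p₀).erase (C.q t) ∪
      (Finset.Icc 1 (s - 1) ∪ Finset.Icc (C.k - C.x + s + 1) C.k).image C.a := by
    intro u hu
    obtain ⟨hu, hne, hmeet⟩ := Finset.mem_filter.1 hu
    rcases C.eq_q_or_eq_a hu with ⟨t', ht', ht'r, rfl⟩ | ⟨j, hj, hjk, rfl⟩
    · exact Finset.mem_union_left _ (Finset.mem_erase.2 ⟨hne.symm, C.q_mem t' ht' ht'r⟩)
    · refine Finset.mem_union_right _ (Finset.mem_image.2 ⟨j, ?_, rfl⟩)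
      by_contra hj'
      simp only [Finset.mem_union, Finset.mem_Icc, not_or] at hj'
      rcases C.q_meets_a_or_meets_a_of_between (m := C.k - C.x + s) hs (by omega) (by omega)
        (by omega) ht htr hmeet with h | h
      · exact h.ne_empty h₁
      · exact h.ne_empty h₂
  have := C.le_card_filter_adj C.hx (C.q_mem_arcs ht htr)
  have := (Finset.card_le_card hsub).trans (Finset.card_union_le _ _)
  have := (Finset.card_image_le (f := C.a)).trans (Finset.card_union_le
    (Finset.Icc 1 (s - 1)) (Finset.Icc (C.k - C.x + s + 1) C.k))
  rw [Finset.card_erase_of_mem (C.q_mem t ht htr), C.hr] at *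
  simp only [Nat.card_Icc] at *
  omega

lemma adj_a_add_x (hx : 0 < C.x) (hj : 1 ≤ j) (hjk : j + C.x ≤ C.k) :
    CArc.meetGraph.Adj (C.a j) (C.a (j + C.x)) :=
  ⟨C.a_ne_a hj (by omega) (by omega) hjk (by omega), _, (C.a j).right_mem_pts,
    C.right_mem_a_of_le_add_x hj (by omega) le_rfl hjk⟩

/-- All arcs `a m` with `i - 2x + 1 ≤ m ≤ i` pass through the right endpoint of the first one. -/
lemma adj_a_of_window (hik : i ≤ C.k) (hcw : (C.a (i - 2 * C.x + 1)).right ∈ (C.a i).pts)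
    {m' : ℕ} (hm : i - 2 * C.x + 1 ≤ m) (hmi : m ≤ i) (hm' : i - 2 * C.x + 1 ≤ m')
    (hm'i : m' ≤ i) (hne : m ≠ m') : CArc.meetGraph.Adj (C.a m) (C.a m') :=
  ⟨C.a_ne_a (by omega) (by omega) (by omega) (by omega) hne, _,
    C.right_mem_a_of_le_of_right_mem_a (by omega) hm hmi hik hcw,
    C.right_mem_a_of_le_of_right_mem_a (by omega) hm' hm'i hik hcw⟩

variable (i) in
/-- For `s < x`, the `s`-th branch set of the complete minor outside `O`: the arcs `a j` with
`j ≡ s + 1 (mod x)` up to index `i - x`, and those with `j ≡ k - x + s + 1 (mod x)` beyond. -/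
def branch (s : ℕ) : Set CArc :=
  (fun c => C.a (s + 1 + C.x * c)) '' Set.Iic ((i - C.x - s - 1) / C.x) ∪
    (fun c => C.a (C.k - C.x + s + 1 - C.x * c)) '' Set.Iic ((C.k - i + s) / C.x)

variable (i) in
/-- The last index of the lower run of `branch i s`. -/
def lowTop (s : ℕ) : ℕ := s + 1 + C.x * ((i - C.x - s - 1) / C.x)

variable (i) in
/-- The first index of the upper run of `branch i s`. -/
def highBot (s : ℕ) : ℕ := C.k - C.x + s + 1 - C.x * ((C.k - i + s) / C.x)

lemma lowTop_mem_window (hs : s < C.x) (hi : 2 * C.x ≤ i) :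
    i - 2 * C.x + 1 ≤ C.lowTop i s ∧ C.lowTop i s ≤ i - C.x := by
  have := Nat.mul_div_le (i - C.x - s - 1) C.x
  have := Nat.lt_mul_div_succ (i - C.x - s - 1) (show 0 < C.x by omega)
  rw [Nat.mul_add, mul_one] at this
  unfold lowTop; omega

lemma highBot_mem_window (hs : s < C.x) (hi : 2 * C.x ≤ i) (hik : i + C.x ≤ C.k) :
    i - C.x + 1 ≤ C.highBot i s ∧ C.highBot i s ≤ i := by
  have := Nat.mul_div_le (C.k - i + s) C.x
  have := Nat.lt_mul_div_succ (C.k - i + s) (show 0 < C.x by omega)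
  rw [Nat.mul_add, mul_one] at this
  unfold highBot; omega

lemma lowTop_injective (hs : s < C.x) (hs' : s' < C.x) (h : C.lowTop i s = C.lowTop i s') :
    s = s' :=
  Nat.eq_of_add_mul_eq_add_mul (c := (i - C.x - s - 1) / C.x) (c' := (i - C.x - s' - 1) / C.x)
    hs hs' (by unfold lowTop at h; omega)

lemma a_lowTop_mem_branch : C.a (C.lowTop i s) ∈ C.branch i s :=
  Or.inl ⟨_, Set.mem_Iic.2 le_rfl, rfl⟩

lemma a_succ_mem_branch : C.a (s + 1) ∈ C.branch i s :=
  Or.inl ⟨0, Set.mem_Iic.2 (Nat.zero_le _), by simp⟩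

lemma a_last_mem_branch : C.a (C.k - C.x + (s + 1)) ∈ C.branch i s :=
  Or.inr ⟨0, Set.mem_Iic.2 (Nat.zero_le _), by simp [add_assoc]⟩

lemma mem_branch (hs : s < C.x) (hi : 2 * C.x ≤ i) (hik : i + C.x ≤ C.k) {u : CArc}
    (hu : u ∈ C.branch i s) : ∃ j, u = C.a j ∧ 1 ≤ j ∧ j ≤ C.k ∧
      ((∃ c, j = s + 1 + C.x * c ∧ j ≤ i - C.x) ∨
        (∃ c, j + C.x * c = C.k - C.x + s + 1 ∧ i - C.x < j)) := by
  have hT := C.lowTop_mem_window hs hi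
  have hB := C.highBot_mem_window hs hi hik
  unfold lowTop at hT
  unfold highBot at hB
  rcases hu with ⟨c, hc, rfl⟩ | ⟨c, hc, rfl⟩
  · have := Nat.mul_le_mul_left C.x (Set.mem_Iic.1 hc)
    exact ⟨_, rfl, by omega, by omega, Or.inl ⟨c, rfl, by omega⟩⟩
  · have := Nat.mul_le_mul_left C.x (Set.mem_Iic.1 hc)
    exact ⟨_, rfl, by omega, by omega, Or.inr ⟨c, by omega, by omega⟩⟩

lemma branch_subset_arcs (hs : s < C.x) (hi : 2 * C.x ≤ i) (hik : i + C.x ≤ C.k) :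
    C.branch i s ⊆ C.F.arcs := by
  intro u hu
  obtain ⟨j, rfl, hj, hjk, -⟩ := C.mem_branch hs hi hik hu
  exact C.a_mem_arcs hj hjk

lemma q_not_mem_branch (ht : 1 ≤ t) (htr : t ≤ C.r) (hs : s < C.x) (hi : 2 * C.x ≤ i)
    (hik : i + C.x ≤ C.k) : C.q t ∉ C.branch i s := fun h => by
  obtain ⟨j, hj, hj1, hjk, -⟩ := C.mem_branch hs hi hik h
  exact C.a_ne_q hj1 hjk ht htr hj.symm

lemma disjoint_branch (hs : s < C.x) (hs' : s' < C.x) (hne : s ≠ s') (hi : 2 * C.x ≤ i)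
    (hik : i + C.x ≤ C.k) : Disjoint (C.branch i s) (C.branch i s') := by
  refine Set.disjoint_left.2 fun u hu hu' => hne ?_
  obtain ⟨j, rfl, hj, hjk, hjs⟩ := C.mem_branch hs hi hik hu
  obtain ⟨j', hjj', hj', hj'k, hjs'⟩ := C.mem_branch hs' hi hik hu'
  obtain rfl := C.a_inj j j' hj hjk hj' hj'k hjj'
  rcases hjs with ⟨c, hc, hjc⟩ | ⟨c, hc, hjc⟩ <;>
    rcases hjs' with ⟨c', hc', hjc'⟩ | ⟨c', hc', hjc'⟩
  · exact Nat.eq_of_add_mul_eq_add_mul (c := c) (c' := c') hs hs' (by omega)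
  · omega
  · omega
  · exact Nat.eq_of_add_mul_eq_add_mul (c := c') (c' := c) hs hs' (by omega)

lemma connected_induce_branch (hs : s < C.x) (hi : 2 * C.x ≤ i) (hik : i + C.x ≤ C.k)
    (hcw : (C.a (i - 2 * C.x + 1)).right ∈ (C.a i).pts) :
    (CArc.meetGraph.induce (C.branch i s)).Connected := by
  have hT := C.lowTop_mem_window hs hi
  have hB := C.highBot_mem_window hs hi hik
  refine SimpleGraph.connected_induce_union ?_ ?_ ⟨_, Set.mem_Iic.2 le_rfl, rfl⟩
    ⟨_, Set.mem_Iic.2 le_rfl, rfl⟩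
    (C.adj_a_of_window (m := C.lowTop i s) (m' := C.highBot i s) (by omega) hcw hT.1
      (by omega) (by omega) hB.2 (by omega))
  · refine (SimpleGraph.connected_induce_image_Iic fun c hc => ?_).preconnected
    have := Nat.mul_le_mul_left C.x (show c + 1 ≤ (i - C.x - s - 1) / C.x by omega)
    rw [Nat.mul_add, mul_one] at this
    unfold lowTop at hT
    simpa only [Nat.mul_add, mul_one, ← add_assoc] using
      C.adj_a_add_x (by omega) (j := s + 1 + C.x * c) (by omega) (by omega)
  · refine (SimpleGraph.connected_induce_image_Iic fun c hc => ?_).preconnected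
    have := Nat.mul_le_mul_left C.x (show c + 1 ≤ (C.k - i + s) / C.x by omega)
    have e : C.x * (c + 1) = C.x * c + C.x := by ring
    unfold highBot at hB
    have h := C.adj_a_add_x (by omega) (j := C.k - C.x + s + 1 - C.x * (c + 1)) (by omega)
      (by omega)
    rw [show C.k - C.x + s + 1 - C.x * (c + 1) + C.x = C.k - C.x + s + 1 - C.x * c by omega] at h
    exact h.symm

lemma isKMinorModel_q :
    IsKMinorModel CArc.meetGraph fun t : Fin C.r => ({C.q (t + 1)} : Set CArc) :=
  IsKMinorModel.of_pairwise_adj fun t t' hne =>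
    ⟨fun h => hne (Fin.ext (by have := C.q_inj _ _ (by omega) t.2 (by omega) t'.2 h; omega)),
      C.p₀, C.p₀_mem_q (by omega) t.2, C.p₀_mem_q (by omega) t'.2⟩

lemma isKMinorModel_branch (hi : 2 * C.x ≤ i) (hik : i + C.x ≤ C.k)
    (hcw : (C.a (i - 2 * C.x + 1)).right ∈ (C.a i).pts) :
    IsKMinorModel CArc.meetGraph fun s : Fin C.x => C.branch i s where
  connected s := C.connected_induce_branch s.2 hi hik hcw
  disjoint s s' hne := C.disjoint_branch s.2 s'.2 (Fin.val_ne_of_ne hne) hi hik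
  adj s s' hne := by
    have hT := C.lowTop_mem_window s.2 hi
    have hT' := C.lowTop_mem_window s'.2 hi
    exact ⟨_, C.a_lowTop_mem_branch, _, C.a_lowTop_mem_branch,
      C.adj_a_of_window (by omega) hcw hT.1 (by omega) hT'.1 (by omega)
        fun h => Fin.val_ne_of_ne hne (C.lowTop_injective s.2 s'.2 h)⟩

lemma exists_adj_q_branch (ht : 1 ≤ t) (htr : t ≤ C.r) (hs : s < C.x) (hi : 2 * C.x ≤ i)
    (hik : i + C.x ≤ C.k) :
    ∃ u ∈ ({C.q t} : Set CArc), ∃ v ∈ C.branch i s, CArc.meetGraph.Adj u v := by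
  have hne : ∀ v ∈ C.branch i s, C.q t ≠ v := fun v hv h =>
    C.q_not_mem_branch ht htr hs hi hik (h ▸ hv)
  rcases C.q_meets_a_or_meets_a ht htr (s := s + 1) (by omega) hs (by omega) with h | h
  · exact ⟨_, rfl, _, C.a_succ_mem_branch, hne _ C.a_succ_mem_branch, h⟩
  · exact ⟨_, rfl, _, C.a_last_mem_branch, hne _ C.a_last_mem_branch, h⟩

lemma hasKMinor_of_right_mem (hi : 2 * C.x ≤ i) (hik : i + C.x ≤ C.k)
    (hcw : (C.a (i - 2 * C.x + 1)).right ∈ (C.a i).pts) : HasKMinor C.F.graph (C.r + C.x) := by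
  rw [ArcFamily.graph_eq_induce]
  refine ((C.isKMinorModel_q.append (C.isKMinorModel_branch hi hik hcw)
    (fun t s => Set.disjoint_singleton_left.2 (C.q_not_mem_branch (by omega) t.2 s.2 hi hik))
    (fun t s => C.exists_adj_q_branch (by omega) t.2 s.2 hi hik)).induce fun b => ?_).hasKMinor
  induction b using Fin.addCases
  · rw [Fin.append_left, Set.singleton_subset_iff]; exact C.q_mem_arcs (by omega) (by omega)
  · rw [Fin.append_right]; exact C.branch_subset_arcs (Fin.is_lt _) hi hik

end LabeledMinCounterexample

/-- In the labeled minimum counterexample, for every `i` with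
`2x ≤ i ≤ k − x`, the arc `a i` is not clockwise adjacent to the arc `a (i − 2x + 1)`. -/
theorem a_not_cw_adjacent (C : LabeledMinCounterexample) :
    ∀ i, 2 * C.x ≤ i → i ≤ C.k - C.x →
      ¬ C.F.CwAdj (C.a (i - 2 * C.x + 1)) (C.a i) := by
  rintro i hi hik ⟨-, hcw⟩
  exact C.no_clique_minor _ C.hx
    (C.hasKMinor_of_right_mem hi (by omega) (ArcFamily.mem_overlap.1 hcw).2)
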